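/- For every Boolean network f of dimension n, the following are equivalent: (1) f is locally bijective, i.e. f^{(i)} is a bijection of 𝔹^n for every i ∈ [n]; (2) f is locally involutive, i.e. f^{(i)} ∘ f^{(i)} = id for every i ∈ [n]; (3) the asynchronous graph A(f) is symmetric. Moreover, if f is trapping and A(f) is symmetric, then f is Marseille (commutative and bijective). -/

import Mathlib

/-!  Common definitions: Boolean networks on `Fin n → Bool`. -/

/-- The update `f^{(S)}` of the coordinates in `S` according to `f`. -/
def upd {n : ℕ} (f : (Fin n → Bool) → Fin n → Bool) (S : Finset (Fin n)) :
    (Fin n → Bool) → Fin n → Bool :=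
  fun x i => if i ∈ S then f x i else x i

/-- `f^{(S,T)} = f^{(T)} ∘ f^{(S)}`. -/
def upd2 {n : ℕ} (f : (Fin n → Bool) → Fin n → Bool) (S T : Finset (Fin n)) :
    (Fin n → Bool) → Fin n → Bool :=
  upd f T ∘ upd f S

/-- `Δ(x,y)`, the set of coordinates where `x` and `y` differ. -/
def delta {n : ℕ} (x y : Fin n → Bool) : Set (Fin n) := {i | x i ≠ y i}

/-- Hamming distance. -/
noncomputable def hdist {n : ℕ} (x y : Fin n → Bool) : ℕ := (delta x y).ncard

/-- The interval (subcube) `[x,y]`. -/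
def interval {n : ℕ} (x y : Fin n → Bool) : Set (Fin n → Bool) :=
  {z | delta x z ⊆ delta x y}

/-- A subcube of `𝔹^n`: fix the coordinates in `S` to `0` and those in `T` to `1`. -/
def IsSubcube {n : ℕ} (X : Set (Fin n → Bool)) : Prop :=
  ∃ S T : Set (Fin n), Disjoint S T ∧
    X = {x | (∀ i ∈ S, x i = false) ∧ (∀ i ∈ T, x i = true)}

/-- The partial order `f ⊑ g` on Boolean networks. -/
def BNle {n : ℕ} (f g : (Fin n → Bool) → Fin n → Bool) : Prop :=
  ∀ x, delta x (f x) ⊆ delta x (g x)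

/-- A trapspace of `f`: an invariant subcube. -/
def IsTrapspace {n : ℕ} (f : (Fin n → Bool) → Fin n → Bool)
    (X : Set (Fin n → Bool)) : Prop :=
  IsSubcube X ∧ ∀ x ∈ X, f x ∈ X

/-- The collection of all trapspaces of `f`. -/
def trapspaces {n : ℕ} (f : (Fin n → Bool) → Fin n → Bool) :
    Set (Set (Fin n → Bool)) :=
  {X | IsTrapspace f X}

/-- The principal trapspace `T_f(x)`: the smallest trapspace of `f` containing `x`. -/
def Tprin {n : ℕ} (f : (Fin n → Bool) → Fin n → Bool) (x : Fin n → Bool) :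
    Set (Fin n → Bool) :=
  ⋂₀ {X | IsTrapspace f X ∧ x ∈ X}

/-- The collection of principal trapspaces of `f`. -/
def PT {n : ℕ} (f : (Fin n → Bool) → Fin n → Bool) : Set (Set (Fin n → Bool)) :=
  {X | ∃ x, X = Tprin f x}

-- The opposite of `x` in a subcube `X` containing `x`: the coordinate `i` is flipped
-- iff some element of `X` differs from `x` there; so `[x, opp X x] = X` when `X` is a
-- subcube containing `x`.
open scoped Classical in
noncomputable def opp {n : ℕ} (X : Set (Fin n → Bool)) (x : Fin n → Bool) :
    Fin n → Bool :=
  fun i => if ∃ y ∈ X, y i ≠ x i then !(x i) else x i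

/-- The trapping closure `f^T`, characterised by `[x, f^T(x)] = T_f(x)`. -/
noncomputable def trapClosure {n : ℕ} (f : (Fin n → Bool) → Fin n → Bool) :
    (Fin n → Bool) → Fin n → Bool :=
  fun x => opp (Tprin f x) x

/-- The general asynchronous graph of `f`, as a relation on `𝔹^n`. -/
def GA {n : ℕ} (f : (Fin n → Bool) → Fin n → Bool) :
    (Fin n → Bool) → (Fin n → Bool) → Prop :=
  fun x y => ∃ S : Finset (Fin n), y = upd f S x

/-- The asynchronous graph of `f`, as a relation on `𝔹^n`. -/
def Agraph {n : ℕ} (f : (Fin n → Bool) → Fin n → Bool) :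
    (Fin n → Bool) → (Fin n → Bool) → Prop :=
  fun x y => ∃ i : Fin n, y = upd f {i} x

/-- The trapping graph of `f`: an edge `(x,y)` iff `y ∈ T_f(x)`. -/
def TG {n : ℕ} (f : (Fin n → Bool) → Fin n → Bool) :
    (Fin n → Bool) → (Fin n → Bool) → Prop :=
  fun x y => y ∈ Tprin f x

/-- A network is trapping if its general asynchronous graph is transitive. -/
def IsTrapping {n : ℕ} (f : (Fin n → Bool) → Fin n → Bool) : Prop :=
  Transitive (GA f)

/-- A commutative Boolean network: `f^{(i,j)} = f^{(j,i)}` for all `i,j`. -/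
def IsCommutative' {n : ℕ} (f : (Fin n → Bool) → Fin n → Bool) : Prop :=
  ∀ i j : Fin n, upd2 f {i} {j} = upd2 f {j} {i}

/-- `𝒜(x)`: the intersection of all members of `𝒜` containing `x`
(`= 𝔹^n` if no member contains `x`, since `⋂₀ ∅ = univ`). -/
def collAt {n : ℕ} (𝒜 : Set (Set (Fin n → Bool))) (x : Fin n → Bool) :
    Set (Fin n → Bool) :=
  ⋂₀ {A ∈ 𝒜 | x ∈ A}

/-- The network `F(𝒜)`, characterised by `[x, F(𝒜)(x)] = 𝒜(x)`. -/
noncomputable def Fnet {n : ℕ} (𝒜 : Set (Set (Fin n → Bool))) :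
    (Fin n → Bool) → Fin n → Bool :=
  fun x => opp (collAt 𝒜 x) x

/-- A collection of subcubes is pre-principal if `𝒬 = {𝒬(x) : x ∈ 𝔹^n}`. -/
def PrePrincipal {n : ℕ} (𝒬 : Set (Set (Fin n → Bool))) : Prop :=
  𝒬 = {X | ∃ x, X = collAt 𝒬 x}

/-- `λ(𝒜)`: unions of subcollections of `𝒜` that are subcubes. -/
def lamColl {n : ℕ} (𝒜 : Set (Set (Fin n → Bool))) : Set (Set (Fin n → Bool)) :=
  {X | ∃ ℛ ⊆ 𝒜, X = ⋃₀ ℛ ∧ IsSubcube X}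

/-- `μ(𝒜) = {𝒜(x) : x ∈ 𝔹^n}`. -/
def muColl {n : ℕ} (𝒜 : Set (Set (Fin n → Bool))) : Set (Set (Fin n → Bool)) :=
  {X | ∃ x, X = collAt 𝒜 x}

/-- A pre-ideal collection of subcubes. -/
def PreIdeal {n : ℕ} (𝒥 : Set (Set (Fin n → Bool))) : Prop :=
  Set.univ ∈ 𝒥 ∧
  (∀ A ∈ 𝒥, ∀ B ∈ 𝒥, (A ∩ B).Nonempty → A ∩ B ∈ 𝒥) ∧
  (∀ ℛ ⊆ 𝒥, IsSubcube (⋃₀ ℛ) → ⋃₀ ℛ ∈ 𝒥)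

/-- The collection of minimal trapspaces of `f`. -/
def MT {n : ℕ} (f : (Fin n → Bool) → Fin n → Bool) : Set (Set (Fin n → Bool)) :=
  {X | IsTrapspace f X ∧ ∀ Y, IsTrapspace f Y → ¬ Y ⊂ X}

/-- `M(f)`: the union of the minimal trapspaces of `f`. -/
def Mset {n : ℕ} (f : (Fin n → Bool) → Fin n → Bool) : Set (Fin n → Bool) :=
  ⋃₀ MT f

-- The min-trapping extension `f^M`: `[x, f^M(x)] = T_f(x)` if `x ∈ M(f)`,
-- and `f^M(x) = ¬x` otherwise.
open scoped Classical in
noncomputable def minExt {n : ℕ} (f : (Fin n → Bool) → Fin n → Bool) :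
    (Fin n → Bool) → Fin n → Bool :=
  fun x => if x ∈ Mset f then opp (Tprin f x) x else fun i => !(x i)

/-!
Write `f^{(i)}(x) = x[i ↦ f(x)_i]`. If `x` is moved by `f^{(i)}`, its image differs from `x`
exactly in `i`, so injectivity of `f^{(i)}` and symmetry of `A(f)` both force `f^{(i)}` to flip
the coordinate back: all three conditions say that each `f^{(i)}` is an involution.

For a trapping network, `y ∈ [x, f(x)]` implies `[y, f(y)] ⊆ [x, f(x)]`. Applied to
`y = f^{(j)}(x)` in both directions (the reverse inclusion is where local involutivity enters),
this shows that updating `j` never changes `f(x)_i` for `i ≠ j`, and by induction neither does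
updating any set of coordinates avoiding `i`. Hence the local updates commute, and
`f = f^{(i)} ∘ f^{([n] ∖ {i})}` for every `i`, which makes `f` itself an involution.
-/

theorem Bool.eq_of_ne_of_ne {a b c : Bool} (ha : a ≠ c) (hb : b ≠ c) : a = b :=
  (Bool.eq_not_iff.2 ha).trans (Bool.eq_not_iff.2 hb).symm

section BooleanNetwork

variable {n : ℕ} {f : (Fin n → Bool) → Fin n → Bool}

theorem upd_singleton (f : (Fin n → Bool) → Fin n → Bool) (i : Fin n) (x : Fin n → Bool) :
    upd f {i} x = Function.update x i (f x i) := by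
  funext k
  by_cases hk : k = i
  · subst hk
    simp [upd]
  · simp [upd, hk]

theorem upd_univ (f : (Fin n → Bool) → Fin n → Bool) : upd f Finset.univ = f := by
  funext x k
  simp [upd]

theorem upd_insert_of_apply_eq {S : Finset (Fin n)} {a : Fin n} {x : Fin n → Bool}
    (h : f (upd f S x) a = f x a) : upd f (insert a S) x = upd f {a} (upd f S x) := by
  funext k
  rw [upd_singleton]
  by_cases hk : k = a
  · subst hk
    simp [upd, h]
  · simp [upd, hk]

theorem delta_upd_subset (S : Finset (Fin n)) (x : Fin n → Bool) :
    delta x (upd f S x) ⊆ delta x (f x) := by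
  intro k hk
  by_cases hkS : k ∈ S
  · simpa [delta, upd, hkS] using hk
  · simp [delta, upd, hkS] at hk

theorem apply_upd_singleton_of_involutive {i : Fin n} (hI : Function.Involutive (upd f {i}))
    (x : Fin n → Bool) : f (upd f {i} x) i = x i := by
  simpa [upd_singleton] using congrFun (hI x) i

theorem upd_singleton_upd_singleton (i : Fin n) (x : Fin n → Bool) :
    upd f {i} (upd f {i} x) = x ∨ upd f {i} (upd f {i} x) = upd f {i} x := by
  by_cases hfix : upd f {i} x = x
  · exact Or.inl (by rw [hfix, hfix])
  have hfx : f x i ≠ x i := fun h => hfix (by rw [upd_singleton, h, Function.update_eq_self])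
  simp only [upd_singleton, Function.update_idem]
  by_cases hfy : f (Function.update x i (f x i)) i = x i
  · rw [hfy, Function.update_eq_self]
    exact Or.inl rfl
  · rw [Bool.eq_of_ne_of_ne hfy hfx]
    exact Or.inr rfl

theorem involutive_of_injective {i : Fin n} (hinj : Function.Injective (upd f {i})) :
    Function.Involutive (upd f {i}) := by
  intro x
  rcases upd_singleton_upd_singleton i x with h | h
  · exact h
  · rw [hinj h, hinj h]

theorem involutive_of_symmetric (hs : Symmetric (Agraph f)) (i : Fin n) :
    Function.Involutive (upd f {i}) := by
  intro x
  obtain ⟨j, hj⟩ := hs ⟨i, rfl⟩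
  rcases eq_or_ne j i with rfl | hji
  · exact hj.symm
  have hxi : x i = upd f {i} x i := by
    rw [congrFun hj i, upd_singleton, Function.update_of_ne (Ne.symm hji)]
  have hfix : upd f {i} x = x := by
    funext k
    by_cases hk : k = i
    · subst hk
      exact hxi.symm
    · rw [upd_singleton, Function.update_of_ne hk]
  rw [hfix, hfix]

theorem ga_of_delta_subset {x y : Fin n → Bool} (h : delta x y ⊆ delta x (f x)) : GA f x y := by
  classical
  refine ⟨Finset.univ.filter fun k => x k ≠ y k, funext fun k => ?_⟩
  by_cases hk : x k = y k
  · simp [upd, hk]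
  · have hfk : x k ≠ f x k := h hk
    simp only [upd, Finset.mem_filter, Finset.mem_univ, true_and, if_pos hk]
    exact Bool.eq_of_ne_of_ne (Ne.symm hk) (Ne.symm hfk)

theorem IsTrapping.delta_subset (ht : IsTrapping f) {x y : Fin n → Bool}
    (h : delta x y ⊆ delta x (f x)) : delta y (f y) ⊆ delta x (f x) := by
  intro k hk
  by_contra hkx
  obtain ⟨T, hT⟩ := ht (ga_of_delta_subset h) ⟨{k}, rfl⟩
  have hfyk : f y k = x k := by
    have hTk := congrFun hT k
    simp only [upd, Finset.mem_singleton, if_true] at hTk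
    split_ifs at hTk
    · exact hTk.trans (not_not.mp hkx).symm
    · exact hTk
  have hyk : y k = x k := (not_not.mp fun hxy => hkx (h hxy)).symm
  exact hk (hyk.trans hfyk.symm)

theorem IsTrapping.apply_upd_singleton (ht : IsTrapping f)
    (hI : ∀ j, Function.Involutive (upd f {j})) {i j : Fin n} (hij : i ≠ j)
    (x : Fin n → Bool) : f (upd f {j} x) i = f x i := by
  set y := upd f {j} x with hy
  have hyi : y i = x i := by rw [hy, upd_singleton, Function.update_of_ne hij]
  by_cases hxi : f x i = x i
  · have hyfy := ht.delta_subset (delta_upd_subset {j} x)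
    have hfyi : f y i = y i := not_not.mp fun h => (hyfy (Ne.symm h)) hxi.symm
    rw [hfyi, hyi, hxi]
  · have hback : delta y x ⊆ delta y (f y) := by
      intro k hk
      have hkj : k = j := by
        by_contra hkj
        exact hk (by rw [hy, upd_singleton, Function.update_of_ne hkj])
      subst hkj
      show y k ≠ f y k
      rwa [apply_upd_singleton_of_involutive (hI k)]
    have hfyi : y i ≠ f y i := ht.delta_subset hback (Ne.symm hxi)
    rw [hyi] at hfyi
    exact Bool.eq_of_ne_of_ne (Ne.symm hfyi) hxi

theorem IsTrapping.apply_upd_of_notMem (ht : IsTrapping f)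
    (hI : ∀ j, Function.Involutive (upd f {j})) {S : Finset (Fin n)} {i : Fin n} (hi : i ∉ S)
    (x : Fin n → Bool) : f (upd f S x) i = f x i := by
  induction S using Finset.induction_on generalizing i with
  | empty => rfl
  | insert a S ha ih =>
    rw [Finset.mem_insert, not_or] at hi
    rw [upd_insert_of_apply_eq (ih ha), ht.apply_upd_singleton hI hi.1, ih hi.2]

theorem IsTrapping.isCommutative' (ht : IsTrapping f)
    (hI : ∀ j, Function.Involutive (upd f {j})) : IsCommutative' f := by
  intro i j
  rcases eq_or_ne i j with rfl | hij
  · rfl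
  funext x
  simp only [upd2, Function.comp_apply]
  rw [← upd_insert_of_apply_eq (ht.apply_upd_singleton hI hij.symm x),
    ← upd_insert_of_apply_eq (ht.apply_upd_singleton hI hij x), Finset.pair_comm]

theorem IsTrapping.involutive (ht : IsTrapping f)
    (hI : ∀ j, Function.Involutive (upd f {j})) : Function.Involutive f := by
  intro x
  funext i
  have hf : f x = upd f {i} (upd f (Finset.univ.erase i) x) := by
    rw [← upd_insert_of_apply_eq (ht.apply_upd_of_notMem hI (Finset.notMem_erase i _) x),
      Finset.insert_erase (Finset.mem_univ i), upd_univ]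
  rw [hf, apply_upd_singleton_of_involutive (hI i)]
  simp [upd]

end BooleanNetwork

/-- locally bijective ↔ locally involutive ↔ symmetric asynchronous
graph; and a trapping network with symmetric asynchronous graph is Marseille. -/
theorem stmt16 (n : ℕ) (f : (Fin n → Bool) → Fin n → Bool) :
    List.TFAE [
      ∀ i : Fin n, Function.Bijective (upd f {i}),
      ∀ i : Fin n, upd f {i} ∘ upd f {i} = id,
      Symmetric (Agraph f)
    ] ∧
    (IsTrapping f → Symmetric (Agraph f) →
      IsCommutative' f ∧ Function.Bijective f) := by
  constructor
  · tfae_have 1 → 2 := fun h i => (involutive_of_injective (h i).1).comp_self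
    tfae_have 2 → 3 := by
      rintro h x y ⟨i, rfl⟩
      exact ⟨i, (congrFun (h i) x).symm⟩
    tfae_have 3 → 1 := fun h i => (involutive_of_symmetric h i).bijective
    tfae_finish
  · intro ht hs
    have hI := involutive_of_symmetric hs
    exact ⟨ht.isCommutative' hI, (ht.involutive hI).bijective⟩
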